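/- Fix n ∈ ℕ and let H^∞_{0,1,…,n}(𝔻) = {f ∈ H^∞(𝔻) : f^{(j)}(0) = 0 for j = 0, 1, …, n}. A map T : H^∞_{0,1,…,n}(𝔻) → H^∞_{0,1,…,n}(𝔻) is an automorphism if and only if there exists θ ∈ ℝ such that (Tf)(z) = f(e^{iθ} z) for all f ∈ H^∞_{0,1,…,n}(𝔻) and all z ∈ 𝔻. -/

import Mathlib

open Set Metric Complex MeasureTheory Filter

noncomputable section

/-- The open unit disc in `ℂ`. -/
def D : Set ℂ := Metric.ball (0 : ℂ) 1

/-- `H^∞(𝔻)`: bounded analytic functions on the open unit disc.  Functions are represented by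
their values on `ℂ`; only the values on `D` are relevant, and two representatives are
identified when they agree on `D`. -/
def Hinf : Set (ℂ → ℂ) :=
  {f | DifferentiableOn ℂ f D ∧ ∃ C : ℝ, ∀ z ∈ D, ‖f z‖ ≤ C}

/-- `H^∞_0(𝔻) = {f ∈ H^∞(𝔻) : f 0 = 0}`. -/
def Hinf0 : Set (ℂ → ℂ) := {f | f ∈ Hinf ∧ f 0 = 0}

/-- The Neil algebra `H^∞_1(𝔻) = {f ∈ H^∞(𝔻) : f'(0) = 0}`. -/
def Hinf1 : Set (ℂ → ℂ) := {f | f ∈ Hinf ∧ deriv f 0 = 0}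

/-- `T` is an automorphism (bijective ℂ-linear multiplicative map) of the algebra of
holomorphic functions `A`, where two functions are identified when they agree on `D`. -/
def IsAlgAutOn (A : Set (ℂ → ℂ)) (T : (ℂ → ℂ) → (ℂ → ℂ)) : Prop :=
  (∀ f ∈ A, T f ∈ A) ∧
  (∀ f ∈ A, ∀ g ∈ A, Set.EqOn f g D → Set.EqOn (T f) (T g) D) ∧
  (∀ f ∈ A, ∀ g ∈ A, Set.EqOn (T (f + g)) (T f + T g) D) ∧
  (∀ (c : ℂ), ∀ f ∈ A, Set.EqOn (T (c • f)) (c • T f) D) ∧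
  (∀ f ∈ A, ∀ g ∈ A, Set.EqOn (T (f * g)) (T f * T g) D) ∧
  (∀ f ∈ A, ∀ g ∈ A, Set.EqOn (T f) (T g) D → Set.EqOn f g D) ∧
  (∀ g ∈ A, ∃ f ∈ A, Set.EqOn (T f) g D)

/-- A function in `H^∞(𝔻)` is inner if its radial boundary values have modulus one at almost
every boundary point. -/
def IsInner (φ : ℂ → ℂ) : Prop :=
  φ ∈ Hinf ∧ ∀ᵐ (θ : ℝ) ∂(volume : Measure ℝ),
    Filter.Tendsto (fun r : ℝ => ‖φ ((r : ℂ) * Complex.exp ((θ : ℂ) * Complex.I))‖)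
      (nhdsWithin 1 (Set.Iio 1)) (nhds 1)

/-- A conformal automorphism of the unit disc: a bijective holomorphic self-map of `D`. -/
def IsConfAut (τ : ℂ → ℂ) : Prop := DifferentiableOn ℂ τ D ∧ Set.BijOn τ D D

/-- `H^∞_{0,1,…,n}(𝔻) = {f ∈ H^∞(𝔻) : f⁽ʲ⁾(0) = 0, j = 0, 1, …, n}`. -/
def HinfUpTo (n : ℕ) : Set (ℂ → ℂ) :=
  {f | f ∈ Hinf ∧ ∀ j ≤ n, iteratedDeriv j f 0 = 0}

lemma D_open : IsOpen D := isOpen_ball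
lemma zero_mem_D : (0:ℂ) ∈ D := by simp [D]
lemma mem_D_iff {z : ℂ} : z ∈ D ↔ ‖z‖ < 1 := by
  simp [D, Metric.mem_ball, Complex.dist_eq]
lemma eqOn_iteratedDeriv {F G : ℂ → ℂ} {U : Set ℂ} (hU : IsOpen U) (h : Set.EqOn F G U)
    (j : ℕ) : Set.EqOn (iteratedDeriv j F) (iteratedDeriv j G) U := by
  induction j with
  | zero => simpa [iteratedDeriv_zero] using h
  | succ j ih =>
    intro z hz
    rw [iteratedDeriv_succ, iteratedDeriv_succ]
    exact Filter.EventuallyEq.deriv_eq (ih.eventuallyEq_of_mem (hU.mem_nhds hz))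

-- iterated derivatives of z^m * u z at 0
lemma iteratedDeriv_pow_mul (m : ℕ) : ∀ (u : ℂ → ℂ), DifferentiableOn ℂ u D →
    (∀ j < m, iteratedDeriv j (fun z => z^m * u z) 0 = 0) ∧
      iteratedDeriv m (fun z => z^m * u z) 0 = m.factorial * u 0 := by
  induction m with
  | zero =>
    intro u hu
    refine ⟨fun j hj => absurd hj (Nat.not_lt_zero j), ?_⟩
    simp [iteratedDeriv_zero]
  | succ m ih =>
    intro u hu
    set v : ℂ → ℂ := fun z => (m+1 : ℂ) * u z + z * deriv u z with hv
    have hu' : DifferentiableOn ℂ (deriv u) D :=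
      ((hu.analyticOnNhd D_open).deriv).differentiableOn
    have hvD : DifferentiableOn ℂ v D :=
      ((differentiableOn_const _).mul hu).add (differentiableOn_id.mul hu')
    have hderiv : Set.EqOn (deriv (fun z => z^(m+1) * u z)) (fun z => z^m * v z) D := by
      intro z hz
      have h1 : HasDerivAt (fun z : ℂ => z^(m+1)) (((m:ℂ)+1) * z^m) z := by
        have := hasDerivAt_pow (m+1) z
        simpa [Nat.cast_add] using this
      have h2 : HasDerivAt u (deriv u z) z :=
        (hu.differentiableAt (D_open.mem_nhds hz)).hasDerivAt
      have h3 : deriv (fun z => z^(m+1) * u z) z = _ := (h1.mul h2).deriv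
      rw [h3, hv]
      ring
    have key : ∀ j, iteratedDeriv (j+1) (fun z => z^(m+1) * u z) 0
        = iteratedDeriv j (fun z => z^m * v z) 0 := by
      intro j
      rw [iteratedDeriv_succ']
      exact eqOn_iteratedDeriv D_open hderiv j zero_mem_D
    constructor
    · intro j hj
      match j with
      | 0 => simp [iteratedDeriv_zero]
      | j+1 =>
        rw [key j]
        exact (ih v hvD).1 j (by omega)
    · rw [key m, (ih v hvD).2, hv]
      simp [Nat.factorial_succ]
      push_cast
      ring
lemma bound_helper {g : ℂ → ℂ} (hg : DifferentiableOn ℂ g D)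
    {c : ℂ} {r : ℝ} (hsub : closedBall c r ⊆ D)
    (C : ℝ) (hC : ∀ z ∈ D, z ∉ closedBall c r → ‖g z‖ ≤ C) :
    ∃ C' : ℝ, ∀ z ∈ D, ‖g z‖ ≤ C' := by
  obtain ⟨C₂, hC₂⟩ := (isCompact_closedBall c r).exists_bound_of_continuousOn
    (hg.continuousOn.mono hsub)
  refine ⟨max C C₂, fun z hz => ?_⟩
  by_cases h : z ∈ closedBall c r
  · exact le_max_of_le_right (by simpa using hC₂ z h)
  · exact le_max_of_le_left (hC z hz h)

lemma Hinf_nonneg_bound {f : ℂ → ℂ} (hf : f ∈ Hinf) :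
    ∃ C : ℝ, 0 ≤ C ∧ ∀ z ∈ D, ‖f z‖ ≤ C := by
  obtain ⟨C, hC⟩ := hf.2
  exact ⟨C, le_trans (norm_nonneg _) (hC 0 zero_mem_D), hC⟩

lemma dslope_mem_Hinf {f : ℂ → ℂ} (hf : f ∈ Hinf) {μ : ℂ} (hμ : μ ∈ D) :
    dslope f μ ∈ Hinf := by
  have hd : DifferentiableOn ℂ (dslope f μ) D :=
    (differentiableOn_dslope (D_open.mem_nhds hμ)).2 hf.1
  obtain ⟨C, hC0, hC⟩ := Hinf_nonneg_bound hf
  set r : ℝ := (1 - ‖μ‖)/2 with hr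
  have hμ1 : ‖μ‖ < 1 := mem_D_iff.1 hμ
  have hrpos : 0 < r := by rw [hr]; linarith
  have hsub : closedBall μ r ⊆ D := by
    intro z hz
    rw [Metric.mem_closedBall, Complex.dist_eq] at hz
    rw [mem_D_iff]
    calc ‖z‖ = ‖z - μ + μ‖ := by ring_nf
    _ ≤ ‖z - μ‖ + ‖μ‖ := norm_add_le _ _
    _ ≤ r + ‖μ‖ := by linarith
    _ < 1 := by rw [hr]; linarith
  refine ⟨hd, bound_helper hd hsub ((C + C)/r) ?_⟩
  intro z hz hz'
  rw [Metric.mem_closedBall, Complex.dist_eq, not_le] at hz'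
  have hne : z ≠ μ := by
    intro h; rw [h] at hz'; simp at hz'; linarith
  rw [dslope_of_ne _ hne, slope_def_field, norm_div]
  have h1 : ‖f z - f μ‖ ≤ C + C := by
    calc ‖f z - f μ‖ ≤ ‖f z‖ + ‖f μ‖ :=
      norm_sub_le _ _
    _ ≤ C + C := add_le_add (hC z hz) (hC μ hμ)
  exact div_le_div₀ (by linarith) h1 hrpos (le_of_lt hz')
-- continuation: factorization
lemma exists_factor (n : ℕ) : ∀ f : ℂ → ℂ, DifferentiableOn ℂ f D →
    (∀ j ≤ n, iteratedDeriv j f 0 = 0) →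
    ∃ g : ℂ → ℂ, DifferentiableOn ℂ g D ∧ ∀ z ∈ D, f z = z^(n+1) * g z := by
  induction n with
  | zero =>
    intro f hf h0
    refine ⟨dslope f 0, (differentiableOn_dslope (D_open.mem_nhds zero_mem_D)).2 hf,
      fun z hz => ?_⟩
    have h1 := sub_smul_dslope f 0 z
    have hf0 : f 0 = 0 := by simpa [iteratedDeriv_zero] using h0 0 le_rfl
    rw [hf0, sub_zero, sub_zero, smul_eq_mul] at h1
    rw [pow_one, ← h1]
  | succ n ih =>
    intro f hf h0
    obtain ⟨h, hh, hfh⟩ := ih f hf (fun j hj => h0 j (le_trans hj (Nat.le_succ n)))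
    have hEq : Set.EqOn f (fun z => z^(n+1) * h z) D := fun z hz => hfh z hz
    have h00 : h 0 = 0 := by
      have e1 := eqOn_iteratedDeriv D_open hEq (n+1) zero_mem_D
      rw [h0 (n+1) le_rfl] at e1
      have e2 := (iteratedDeriv_pow_mul (n+1) h hh).2
      rw [← e1] at e2
      have hne : ((n+1).factorial : ℂ) ≠ 0 := Nat.cast_ne_zero.2 (Nat.factorial_ne_zero _)
      exact (mul_eq_zero.1 e2.symm).resolve_left hne
    refine ⟨dslope h 0, (differentiableOn_dslope (D_open.mem_nhds zero_mem_D)).2 hh,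
      fun z hz => ?_⟩
    have h1 := sub_smul_dslope h 0 z
    rw [h00, sub_zero, sub_zero, smul_eq_mul] at h1
    rw [hfh z hz, ← h1]
    ring

lemma factor_mem_Hinf {n : ℕ} {f g : ℂ → ℂ} (hf : f ∈ Hinf) (hg : DifferentiableOn ℂ g D)
    (hfg : ∀ z ∈ D, f z = z^(n+1) * g z) : g ∈ Hinf := by
  obtain ⟨C, hC0, hC⟩ := Hinf_nonneg_bound hf
  have hsub : closedBall (0:ℂ) (1/2) ⊆ D := by
    intro z hz
    rw [Metric.mem_closedBall, Complex.dist_eq, sub_zero] at hz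
    rw [mem_D_iff]; linarith
  refine ⟨hg, bound_helper hg hsub (C * 2^(n+1)) ?_⟩
  intro z hz hz'
  rw [Metric.mem_closedBall, Complex.dist_eq, sub_zero, not_le] at hz'
  have hpow : ((1:ℝ)/2)^(n+1) ≤ ‖z‖ ^ (n+1) :=
    pow_le_pow_left₀ (by norm_num) (le_of_lt hz') _
  have h1 : ‖g z‖ * ((1:ℝ)/2)^(n+1) ≤ C := by
    calc ‖g z‖ * ((1:ℝ)/2)^(n+1)
        ≤ ‖g z‖ * ‖z‖ ^ (n+1) :=
          mul_le_mul_of_nonneg_left hpow (norm_nonneg _)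
      _ = ‖z^(n+1) * g z‖ := by
          rw [norm_mul, norm_pow]; ring
      _ = ‖f z‖ := by rw [hfg z hz]
      _ ≤ C := hC z hz
  have h2 : (0:ℝ) < ((1:ℝ)/2)^(n+1) := by positivity
  calc ‖g z‖ = ‖g z‖ * ((1:ℝ)/2)^(n+1) / ((1:ℝ)/2)^(n+1) := by
        field_simp
    _ ≤ C / ((1:ℝ)/2)^(n+1) := by gcongr
    _ = C * 2^(n+1) := by rw [div_eq_mul_inv]; congr 1; rw [← inv_pow]; norm_num

lemma mem_HinfUpTo_iff {n : ℕ} {f : ℂ → ℂ} :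
    f ∈ HinfUpTo n ↔ f ∈ Hinf ∧ ∃ g ∈ Hinf, ∀ z ∈ D, f z = z^(n+1) * g z := by
  constructor
  · rintro ⟨hf, hd⟩
    obtain ⟨g, hg, hfg⟩ := exists_factor n f hf.1 hd
    exact ⟨hf, g, factor_mem_Hinf hf hg hfg, hfg⟩
  · rintro ⟨hf, g, hg, hfg⟩
    refine ⟨hf, fun j hj => ?_⟩
    have hEq : Set.EqOn f (fun z => z^(n+1) * g z) D := fun z hz => hfg z hz
    rw [eqOn_iteratedDeriv D_open hEq j zero_mem_D]
    exact (iteratedDeriv_pow_mul (n+1) g hg.1).1 j (by omega)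
-- Hinf closure lemmas
lemma Hinf_add {f g : ℂ → ℂ} (hf : f ∈ Hinf) (hg : g ∈ Hinf) : f + g ∈ Hinf := by
  obtain ⟨Cf, _, hCf⟩ := Hinf_nonneg_bound hf
  obtain ⟨Cg, _, hCg⟩ := Hinf_nonneg_bound hg
  refine ⟨hf.1.add hg.1, Cf + Cg, fun z hz => ?_⟩
  calc ‖(f+g) z‖ = ‖f z + g z‖ := rfl
    _ ≤ ‖f z‖ + ‖g z‖ := norm_add_le _ _
    _ ≤ Cf + Cg := add_le_add (hCf z hz) (hCg z hz)

lemma Hinf_mul {f g : ℂ → ℂ} (hf : f ∈ Hinf) (hg : g ∈ Hinf) : f * g ∈ Hinf := by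
  obtain ⟨Cf, hCf0, hCf⟩ := Hinf_nonneg_bound hf
  obtain ⟨Cg, hCg0, hCg⟩ := Hinf_nonneg_bound hg
  refine ⟨hf.1.mul hg.1, Cf * Cg, fun z hz => ?_⟩
  calc ‖(f*g) z‖ = ‖f z‖ * ‖g z‖ := norm_mul _ _
    _ ≤ Cf * Cg := mul_le_mul (hCf z hz) (hCg z hz) (norm_nonneg _) hCf0

lemma Hinf_smul (c : ℂ) {f : ℂ → ℂ} (hf : f ∈ Hinf) : c • f ∈ Hinf := by
  obtain ⟨Cf, _, hCf⟩ := Hinf_nonneg_bound hf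
  refine ⟨hf.1.const_smul c, ‖c‖ * Cf, fun z hz => ?_⟩
  calc ‖(c • f) z‖ = ‖c‖ * ‖f z‖ := by
        simp [smul_eq_mul]
    _ ≤ ‖c‖ * Cf := mul_le_mul_of_nonneg_left (hCf z hz) (norm_nonneg _)

lemma Hinf_const (c : ℂ) : (fun _ : ℂ => c) ∈ Hinf :=
  ⟨differentiableOn_const _, ‖c‖, fun z _ => le_rfl⟩

lemma Hinf_monomial (k : ℕ) : (fun z : ℂ => z^k) ∈ Hinf := by
  refine ⟨(differentiable_pow k).differentiableOn, 1, fun z hz => ?_⟩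
  rw [norm_pow]
  exact pow_le_one₀ (norm_nonneg _) (le_of_lt (mem_D_iff.1 hz))

lemma Hinf_pow {f : ℂ → ℂ} (hf : f ∈ Hinf) (k : ℕ) : (fun z => (f z)^k) ∈ Hinf := by
  obtain ⟨Cf, hCf0, hCf⟩ := Hinf_nonneg_bound hf
  refine ⟨?_, Cf^k, fun z hz => ?_⟩
  · exact hf.1.pow k
  · rw [norm_pow]
    exact pow_le_pow_left₀ (norm_nonneg _) (hCf z hz) k

lemma Hinf_sub_const (μ : ℂ) : (fun z : ℂ => z - μ) ∈ Hinf := by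
  refine ⟨(differentiable_id.sub_const μ).differentiableOn, 1 + ‖μ‖, fun z hz => ?_⟩
  calc ‖z - μ‖ ≤ ‖z‖ + ‖μ‖ := norm_sub_le _ _
    _ ≤ 1 + ‖μ‖ := by
        have := le_of_lt (mem_D_iff.1 hz); linarith

-- HinfUpTo closure
lemma memA_of_factor {n : ℕ} {f G : ℂ → ℂ} (hfH : f ∈ Hinf) (hG : G ∈ Hinf)
    (h : ∀ z ∈ D, f z = z^(n+1) * G z) : f ∈ HinfUpTo n :=
  mem_HinfUpTo_iff.2 ⟨hfH, G, hG, h⟩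

lemma memA_pow_mul {n : ℕ} {G : ℂ → ℂ} (hG : G ∈ Hinf) :
    (fun z => z^(n+1) * G z) ∈ HinfUpTo n :=
  memA_of_factor (Hinf_mul (Hinf_monomial (n+1)) hG) hG (fun _ _ => rfl)

lemma memA_Hinf {n : ℕ} {f : ℂ → ℂ} (hf : f ∈ HinfUpTo n) : f ∈ Hinf := hf.1

lemma memA_add {n : ℕ} {f g : ℂ → ℂ} (hf : f ∈ HinfUpTo n) (hg : g ∈ HinfUpTo n) :
    f + g ∈ HinfUpTo n := by
  obtain ⟨hfH, F, hF, hfF⟩ := mem_HinfUpTo_iff.1 hf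
  obtain ⟨hgH, G, hG, hgG⟩ := mem_HinfUpTo_iff.1 hg
  refine memA_of_factor (Hinf_add hfH hgH) (Hinf_add hF hG) (fun z hz => ?_)
  simp only [Pi.add_apply, hfF z hz, hgG z hz]
  ring

lemma memA_smul {n : ℕ} (c : ℂ) {f : ℂ → ℂ} (hf : f ∈ HinfUpTo n) :
    c • f ∈ HinfUpTo n := by
  obtain ⟨hfH, F, hF, hfF⟩ := mem_HinfUpTo_iff.1 hf
  refine memA_of_factor (Hinf_smul c hfH) (Hinf_smul c hF) (fun z hz => ?_)
  simp only [Pi.smul_apply, smul_eq_mul, hfF z hz]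
  ring

lemma memA_mul {n : ℕ} {f g : ℂ → ℂ} (hf : f ∈ HinfUpTo n) (hg : g ∈ HinfUpTo n) :
    f * g ∈ HinfUpTo n := by
  obtain ⟨hfH, F, hF, hfF⟩ := mem_HinfUpTo_iff.1 hf
  obtain ⟨hgH, G, hG, hgG⟩ := mem_HinfUpTo_iff.1 hg
  refine memA_of_factor (Hinf_mul hfH hgH)
    (Hinf_mul (Hinf_monomial (n+1)) (Hinf_mul hF hG)) (fun z hz => ?_)
  simp only [Pi.mul_apply, hfF z hz, hgG z hz]
  ring

lemma memA_pow {n : ℕ} {f : ℂ → ℂ} (hf : f ∈ HinfUpTo n) (k : ℕ) :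
    f^(k+1) ∈ HinfUpTo n := by
  induction k with
  | zero => simpa [pow_one] using hf
  | succ k ih =>
    have : f^(k+2) = f^(k+1) * f := by rw [pow_succ]
    rw [this]
    exact memA_mul ih hf

lemma memA_monomial (n k : ℕ) : (fun z : ℂ => z^(n+1+k)) ∈ HinfUpTo n := by
  refine memA_of_factor (Hinf_monomial (n+1+k)) (Hinf_monomial k) (fun z hz => ?_)
  rw [← pow_add]

lemma memA_congr {n : ℕ} {f g : ℂ → ℂ} (hf : f ∈ HinfUpTo n) (h : Set.EqOn g f D)
    (hb : ∃ C : ℝ, ∀ z ∈ D, ‖g z‖ ≤ C) : g ∈ HinfUpTo n := by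
  obtain ⟨hfH, hfd⟩ := hf
  refine ⟨⟨hfH.1.congr h, hb⟩, fun j hj => ?_⟩
  rw [eqOn_iteratedDeriv D_open h j zero_mem_D]
  exact hfd j hj
def mono1 (n : ℕ) : ℂ → ℂ := fun z => z^(n+1)
def mono2 (n : ℕ) : ℂ → ℂ := fun z => z^(n+2)

lemma mono1_memA (n : ℕ) : mono1 n ∈ HinfUpTo n := by
  have := memA_monomial n 0
  exact this

lemma mono2_memA (n : ℕ) : mono2 n ∈ HinfUpTo n := by
  have := memA_monomial n 1
  have h : n+1+1 = n+2 := rfl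
  exact this

lemma mono_pow (n : ℕ) : (mono2 n)^(n+1) = (mono1 n)^(n+2) := by
  funext z
  simp only [Pi.pow_apply, mono1, mono2, ← pow_mul]
  rw [Nat.mul_comm]

lemma half_mem_D : (1/2 : ℂ) ∈ D := by
  rw [mem_D_iff]; norm_num

lemma D_preconn : IsPreconnected D := (convex_ball _ _).isPreconnected

lemma key_aut (n : ℕ) (T : (ℂ → ℂ) → (ℂ → ℂ)) (hT : IsAlgAutOn (HinfUpTo n) T) :
    ∃ τ : ℂ → ℂ, DifferentiableOn ℂ τ D ∧ (∀ z ∈ D, τ z ∈ D) ∧ τ 0 = 0 ∧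
      ∀ f ∈ HinfUpTo n, ∀ z ∈ D, T f z = f (τ z) := by
  classical
  obtain ⟨hMem, hCong, hAdd, hSmul, hMul, hInj, hSurj⟩ := hT
  have hAdd' : ∀ f ∈ HinfUpTo n, ∀ g ∈ HinfUpTo n, ∀ z ∈ D,
      T (f + g) z = T f z + T g z := by
    intro f hf g hg z hz; simpa using hAdd f hf g hg hz
  have hSmul' : ∀ (c : ℂ), ∀ f ∈ HinfUpTo n, ∀ z ∈ D, T (c • f) z = c * T f z := by
    intro c f hf z hz; simpa [smul_eq_mul] using hSmul c f hf hz
  have hMul' : ∀ f ∈ HinfUpTo n, ∀ g ∈ HinfUpTo n, ∀ z ∈ D,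
      T (f * g) z = T f z * T g z := by
    intro f hf g hg z hz; simpa using hMul f hf g hg hz
  have hTpow : ∀ f ∈ HinfUpTo n, ∀ (k : ℕ), ∀ z ∈ D,
      T (f^(k+1)) z = (T f z)^(k+1) := by
    intro f hf k
    induction k with
    | zero => intro z hz; rw [pow_one, pow_one]
    | succ k ih =>
      intro z hz
      have h1 : f^(k+1+1) = f^(k+1) * f := pow_succ f (k+1)
      rw [h1, hMul' _ (memA_pow hf k) _ hf z hz, ih z hz, ← pow_succ]
  have hTbA := hMem _ (mono1_memA n)
  have hTb2A := hMem _ (mono2_memA n)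
  have hTbd : DifferentiableOn ℂ (T (mono1 n)) D := hTbA.1.1
  have hTb2d : DifferentiableOn ℂ (T (mono2 n)) D := hTb2A.1.1
  have hTb0 : T (mono1 n) 0 = 0 := by
    simpa [iteratedDeriv_zero] using hTbA.2 0 (Nat.zero_le n)
  have h0A : (0 : ℂ → ℂ) ∈ HinfUpTo n := by
    refine memA_of_factor ⟨differentiableOn_const 0, 0, fun z _ => by simp⟩
      (Hinf_const 0) (fun z _ => by simp)
  have hT0 : ∀ z ∈ D, T 0 z = 0 := by
    intro z hz
    have h := hSmul' 0 (mono1 n) (mono1_memA n) z hz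
    rw [zero_smul] at h
    simpa using h
  have hTb_ne : ¬ Set.EqOn (T (mono1 n)) (0 : ℂ → ℂ) D := by
    intro h
    have hb0 : Set.EqOn (mono1 n) (0 : ℂ → ℂ) D := by
      apply hInj _ (mono1_memA n) 0 h0A
      intro z hz
      rw [h hz]
      exact (hT0 z hz).symm
    have := hb0 half_mem_D
    simp only [mono1, Pi.zero_apply] at this
    exact pow_ne_zero (n+1) (by norm_num : (1/2:ℂ) ≠ 0) this
  -- the norm bound
  have hTb_le : ∀ z ∈ D, ‖T (mono1 n) z‖ ≤ 1 := by
    intro lam hlam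
    by_contra hgt
    push_neg at hgt
    set c := T (mono1 n) lam with hcdef
    have hc0 : c ≠ 0 := by
      intro h; rw [h] at hgt; simp at hgt; linarith
    have hden : ∀ z ∈ D, z^(n+1) - c ≠ 0 := by
      intro z hz h
      rw [sub_eq_zero] at h
      have h1 : ‖z‖ ^ (n+1) ≤ 1 :=
        pow_le_one₀ (norm_nonneg _) (mem_D_iff.1 hz).le
      rw [← norm_pow, h] at h1
      linarith
    have hG : (fun z : ℂ => (z^(n+1) - c)⁻¹) ∈ Hinf := by
      refine ⟨DifferentiableOn.inv (((differentiable_pow _).differentiableOn).sub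
        (differentiableOn_const c)) hden, (‖c‖ - 1)⁻¹, ?_⟩
      intro z hz
      rw [norm_inv]
      have h3 : ‖c‖ - 1 ≤ ‖z^(n+1) - c‖ := by
        have h4 : ‖z^(n+1)‖ ≤ 1 :=
          by rw [norm_pow]; exact pow_le_one₀ (norm_nonneg _) (mem_D_iff.1 hz).le
        have h5 : ‖c‖ - ‖z^(n+1)‖ ≤ ‖c - z^(n+1)‖ := by
          simpa using norm_sub_norm_le c (z^(n+1))
        rw [norm_sub_rev]
        linarith
      exact inv_anti₀ (by linarith) h3
    set v : ℂ → ℂ := fun z => z^(n+1) * (z^(n+1) - c)⁻¹ with hvdef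
    have hvA : v ∈ HinfUpTo n := memA_pow_mul hG
    have hid : Set.EqOn (mono1 n * v + (-c) • v) (mono1 n) D := by
      intro z hz
      have hd := hden z hz
      simp only [Pi.add_apply, Pi.mul_apply, Pi.smul_apply, smul_eq_mul, mono1, hvdef]
      field_simp
      ring
    have huA : mono1 n * v + (-c) • v ∈ HinfUpTo n :=
      memA_add (memA_mul (mono1_memA n) hvA) (memA_smul (-c) hvA)
    have e1 : T (mono1 n * v + (-c) • v) lam = T (mono1 n) lam :=
      hCong _ huA _ (mono1_memA n) hid hlam
    have e2 := hAdd' _ (memA_mul (mono1_memA n) hvA) _ (memA_smul (-c) hvA) lam hlam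
    have e3 := hMul' _ (mono1_memA n) _ hvA lam hlam
    have e4 := hSmul' (-c) v hvA lam hlam
    rw [e2, e3, e4] at e1
    have hc : c = 0 := by linear_combination -e1
    exact hc0 hc
  -- strict bound
  have hTb_lt : ∀ z ∈ D, ‖T (mono1 n) z‖ < 1 := by
    intro lam hlam
    rcases lt_or_eq_of_le (hTb_le lam hlam) with h | h
    · exact h
    · exfalso
      have hmax : IsMaxOn (norm ∘ (T (mono1 n))) D lam := by
        intro z hz
        simp only [Function.comp_apply]
        rw [h]
        exact hTb_le z hz
      have heq := Complex.eqOn_of_isPreconnected_of_isMaxOn_norm D_preconn D_open hTbd hlam hmax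
      have h2 := heq zero_mem_D
      rw [hTb0] at h2
      simp only [Function.const_apply] at h2
      rw [← h2] at h
      simp at h
  -- the relation
  have hrel : ∀ lam ∈ D, (T (mono2 n) lam)^(n+1) = (T (mono1 n) lam)^(n+2) := by
    intro lam hlam
    have h1 := hTpow (mono2 n) (mono2_memA n) n lam hlam
    have h2 : T ((mono1 n)^(n+2)) lam = (T (mono1 n) lam)^(n+2) :=
      hTpow (mono1 n) (mono1_memA n) (n+1) lam hlam
    rw [mono_pow n] at h1
    rw [← h1, h2]
  -- define τ
  set τ : ℂ → ℂ := fun z => if T (mono1 n) z = 0 then 0 else T (mono2 n) z / T (mono1 n) z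
    with hτdef
  have hτ1 : ∀ lam ∈ D, (τ lam)^(n+1) = T (mono1 n) lam := by
    intro lam hlam
    by_cases h : T (mono1 n) lam = 0
    · rw [hτdef]
      simp only [if_pos h, h]
      exact zero_pow (by omega)
    · rw [hτdef]
      simp only [if_neg h]
      rw [div_pow, hrel lam hlam, pow_succ]
      exact mul_div_cancel_left₀ _ (pow_ne_zero _ h)
  have hτ2 : ∀ lam ∈ D, (τ lam)^(n+2) = T (mono2 n) lam := by
    intro lam hlam
    by_cases h : T (mono1 n) lam = 0
    · have h1 : (T (mono2 n) lam)^(n+1) = 0 := by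
        rw [hrel lam hlam, h]; exact zero_pow (by omega)
      have h2 : T (mono2 n) lam = 0 := by
        exact pow_eq_zero_iff (by omega) |>.1 h1
      rw [hτdef]
      simp only [if_pos h, h2]
      exact zero_pow (by omega)
    · rw [show (n+2) = (n+1)+1 from rfl, pow_succ, hτ1 lam hlam]
      rw [hτdef]
      simp only [if_neg h]
      rw [mul_comm, div_mul_cancel₀ _ h]
  have hτD : ∀ z ∈ D, τ z ∈ D := by
    intro lam hlam
    rw [mem_D_iff]
    by_contra hge
    push_neg at hge
    have h1 : (1:ℝ) ≤ ‖τ lam‖^(n+1) := one_le_pow₀ hge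
    rw [← norm_pow, hτ1 lam hlam] at h1
    exact absurd h1 (not_le.2 (hTb_lt lam hlam))
  have hτ0 : τ 0 = 0 := by rw [hτdef]; simp [hTb0]
  -- representation
  have hrep : ∀ f ∈ HinfUpTo n, ∀ lam ∈ D, T f lam = f (τ lam) := by
    intro f hf lam hlam
    by_cases hw : T (mono1 n) lam = 0
    · have hτl : τ lam = 0 := by rw [hτdef]; simp [hw]
      have hf0 : f 0 = 0 := by simpa [iteratedDeriv_zero] using hf.2 0 (Nat.zero_le n)
      rw [hτl, hf0]
      obtain ⟨hfH, G, hG, hfG⟩ := mem_HinfUpTo_iff.1 hf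
      have hr2A : (fun z : ℂ => z^(n+1) * (G z)^(n+2)) ∈ HinfUpTo n :=
        memA_pow_mul (Hinf_pow hG (n+2))
      have hfpowA : f^(n+2) ∈ HinfUpTo n := memA_pow hf (n+1)
      have hbpowA : (mono1 n)^(n+1) ∈ HinfUpTo n := memA_pow (mono1_memA n) n
      have hident : Set.EqOn (f^(n+2))
          ((mono1 n)^(n+1) * (fun z : ℂ => z^(n+1) * (G z)^(n+2))) D := by
        intro z hz
        simp only [Pi.mul_apply, Pi.pow_apply, mono1]
        rw [hfG z hz]
        ring
      have e1 : T (f^(n+2)) lam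
          = T ((mono1 n)^(n+1) * (fun z : ℂ => z^(n+1) * (G z)^(n+2))) lam :=
        hCong _ hfpowA _ (memA_mul hbpowA hr2A) hident hlam
      have e2 := hMul' _ hbpowA _ hr2A lam hlam
      have e3 : T ((mono1 n)^(n+1)) lam = (T (mono1 n) lam)^(n+1) :=
        hTpow (mono1 n) (mono1_memA n) n lam hlam
      have e4 : T (f^(n+2)) lam = (T f lam)^(n+2) :=
        hTpow f hf (n+1) lam hlam
      rw [e2, e3, hw, e4] at e1
      have h5 : (T f lam)^(n+2) = 0 := by
        rw [e1, zero_pow (by omega : n+1 ≠ 0)]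
        ring
      exact pow_eq_zero_iff (by omega : n+2 ≠ 0) |>.1 h5
    · set μ := τ lam with hμdef
      have hμD : μ ∈ D := hτD lam hlam
      have hμ0 : μ ≠ 0 := by
        intro h
        apply hw
        rw [← hτ1 lam hlam, ← hμdef, h]
        exact zero_pow (by omega)
      have hgH : dslope f μ ∈ Hinf := dslope_mem_Hinf hf.1 hμD
      have hfg : ∀ z : ℂ, f z - f μ = (z - μ) * dslope f μ z := by
        intro z
        have h := sub_smul_dslope f μ z
        rw [smul_eq_mul] at h
        exact h.symm
      have hrA : (fun z : ℂ => z^(n+1) * dslope f μ z) ∈ HinfUpTo n := memA_pow_mul hgH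
      have hqA : mono2 n + (-μ) • mono1 n ∈ HinfUpTo n :=
        memA_add (mono2_memA n) (memA_smul _ (mono1_memA n))
      have hLA : f * mono1 n * mono1 n + (-(f μ)) • (mono1 n * mono1 n) ∈ HinfUpTo n :=
        memA_add (memA_mul (memA_mul hf (mono1_memA n)) (mono1_memA n))
          (memA_smul _ (memA_mul (mono1_memA n) (mono1_memA n)))
      have hident : Set.EqOn (f * mono1 n * mono1 n + (-(f μ)) • (mono1 n * mono1 n))
          ((mono2 n + (-μ) • mono1 n) * (fun z : ℂ => z^(n+1) * dslope f μ z)) D := by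
        intro z hz
        simp only [Pi.add_apply, Pi.mul_apply, Pi.smul_apply, smul_eq_mul, mono1, mono2]
        linear_combination (z^(n+1) * z^(n+1)) * hfg z
      have e1 : T (f * mono1 n * mono1 n + (-(f μ)) • (mono1 n * mono1 n)) lam
          = T ((mono2 n + (-μ) • mono1 n) * (fun z : ℂ => z^(n+1) * dslope f μ z)) lam :=
        hCong _ hLA _ (memA_mul hqA hrA) hident hlam
      have e2 := hAdd' _ (memA_mul (memA_mul hf (mono1_memA n)) (mono1_memA n))
        _ (memA_smul (-(f μ)) (memA_mul (mono1_memA n) (mono1_memA n))) lam hlam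
      have e3 := hMul' _ (memA_mul hf (mono1_memA n)) _ (mono1_memA n) lam hlam
      have e4 := hMul' _ hf _ (mono1_memA n) lam hlam
      have e5 := hSmul' (-(f μ)) _ (memA_mul (mono1_memA n) (mono1_memA n)) lam hlam
      have e6 := hMul' _ (mono1_memA n) _ (mono1_memA n) lam hlam
      have e7 := hMul' _ hqA _ hrA lam hlam
      have e8 := hAdd' _ (mono2_memA n) _ (memA_smul (-μ) (mono1_memA n)) lam hlam
      have e9 := hSmul' (-μ) _ (mono1_memA n) lam hlam
      rw [e2, e3, e4, e5, e6, e7, e8, e9] at e1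
      have hx : T (mono2 n) lam + -μ * T (mono1 n) lam = 0 := by
        rw [← hτ1 lam hlam, ← hτ2 lam hlam, ← hμdef]
        ring
      have h6 : (T f lam - f μ) * (T (mono1 n) lam * T (mono1 n) lam) = 0 := by
        linear_combination e1 + (T ((fun z : ℂ => z^(n+1) * dslope f μ z)) lam) * hx
      rcases mul_eq_zero.1 h6 with h7 | h7
      · exact sub_eq_zero.1 h7
      · exact absurd h7 (mul_ne_zero hw hw)
  -- differentiability
  have hdiff_ne : ∀ lam ∈ D, T (mono1 n) lam ≠ 0 → DifferentiableAt ℂ τ lam := by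
    intro lam hlam hw
    have hcont : ContinuousAt (T (mono1 n)) lam :=
      (hTbd.differentiableAt (D_open.mem_nhds hlam)).continuousAt
    have hev : ∀ᶠ z in nhds lam, T (mono1 n) z ≠ 0 := hcont.eventually_ne hw
    have hd : DifferentiableAt ℂ (fun z => T (mono2 n) z / T (mono1 n) z) lam :=
      ((hTb2d.differentiableAt (D_open.mem_nhds hlam))).div
        (hTbd.differentiableAt (D_open.mem_nhds hlam)) hw
    apply hd.congr_of_eventuallyEq
    filter_upwards [hev] with z hz
    rw [hτdef]
    simp [hz]
  have hτdiff : DifferentiableOn ℂ τ D := by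
    intro lam hlam
    by_cases hw : T (mono1 n) lam = 0
    · have hTbA' : AnalyticOnNhd ℂ (T (mono1 n)) D := hTbd.analyticOnNhd D_open
      rcases (hTbA' lam hlam).eventually_eq_zero_or_eventually_ne_zero with hz | hnz
      · exact absurd
          (hTbA'.eqOn_zero_of_preconnected_of_eventuallyEq_zero D_preconn hlam hz) hTb_ne
      · have hnz' : ∀ᶠ z in nhds lam, z ≠ lam → T (mono1 n) z ≠ 0 := by
          have := eventually_nhdsWithin_iff.1 hnz
          filter_upwards [this] with z hz hne
          exact hz hne
        obtain ⟨t, ht_mem, ht⟩ := Filter.eventually_iff_exists_mem.1 hnz'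
        have hsnhds : t ∩ D ∈ nhds lam := Filter.inter_mem ht_mem (D_open.mem_nhds hlam)
        have hdOn : DifferentiableOn ℂ τ ((t ∩ D) \ {lam}) := by
          intro z hz
          have hne : z ≠ lam := hz.2
          exact (hdiff_ne z hz.1.2 (ht z hz.1.1 hne)).differentiableWithinAt
        have hτl : τ lam = 0 := by rw [hτdef]; simp [hw]
        have habs : ∀ z ∈ D, ‖τ z‖ ^ (n+1) = ‖T (mono1 n) z‖ := by
          intro z hz; rw [← norm_pow, hτ1 z hz]
        have hcontb : ContinuousAt (T (mono1 n)) lam :=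
          (hTbd.differentiableAt (D_open.mem_nhds hlam)).continuousAt
        have htend : Filter.Tendsto (fun z => ‖T (mono1 n) z‖)
            (nhds lam) (nhds 0) := by
          have hcomp : ContinuousAt (fun z => ‖T (mono1 n) z‖) lam :=
            continuous_norm.continuousAt.comp hcontb
          simpa [ContinuousAt, hw] using hcomp
        have hcont : ContinuousAt τ lam := by
          rw [ContinuousAt, hτl, NormedAddCommGroup.tendsto_nhds_zero]
          intro ε hε
          have hε' : (0:ℝ) < min ε 1 := lt_min hε one_pos
          have h1 : ∀ᶠ z in nhds lam, ‖T (mono1 n) z‖ < (min ε 1)^(n+1) :=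
            htend.eventually_lt_const (by positivity)
          have h2 : ∀ᶠ z in nhds lam, z ∈ D := D_open.eventually_mem hlam
          filter_upwards [h1, h2] with z hz1 hz2
          have h3 : ‖τ z‖^(n+1) < (min ε 1)^(n+1) := by
            rw [habs z hz2]; exact hz1
          have h4 : ‖τ z‖ < min ε 1 :=
            lt_of_pow_lt_pow_left₀ _ (le_of_lt hε') h3
          exact lt_of_lt_of_le h4 (min_le_left _ _)
        have hres := (Complex.differentiableOn_compl_singleton_and_continuousAt_iff
          hsnhds).1 ⟨hdOn, hcont⟩
        exact (hres.differentiableAt hsnhds).differentiableWithinAt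
    · exact (hdiff_ne lam hlam hw).differentiableWithinAt
  exact ⟨τ, hτdiff, hτD, hτ0, hrep⟩
lemma eq_of_pow_eq {x y : ℂ} {m : ℕ} (h1 : x^(m+1) = y^(m+1)) (h2 : x^(m+2) = y^(m+2)) :
    x = y := by
  by_cases hx : x = 0
  · subst hx
    rw [zero_pow (by omega : m+1 ≠ 0)] at h1
    exact ((pow_eq_zero_iff (by omega : m+1 ≠ 0)).1 h1.symm).symm
  · have hx1 : x^(m+1) ≠ 0 := pow_ne_zero _ hx
    have h3 : x^(m+1) * x = x^(m+1) * y := by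
      calc x^(m+1) * x = x^(m+2) := (pow_succ x (m+1)).symm
        _ = y^(m+2) := h2
        _ = y^(m+1) * y := pow_succ y (m+1)
        _ = x^(m+1) * y := by rw [h1]
    exact mul_left_cancel₀ hx1 h3

lemma inverse_aut (n : ℕ) (T : (ℂ → ℂ) → (ℂ → ℂ)) (hT : IsAlgAutOn (HinfUpTo n) T) :
    ∃ S : (ℂ → ℂ) → (ℂ → ℂ), IsAlgAutOn (HinfUpTo n) S ∧
      (∀ f ∈ HinfUpTo n, Set.EqOn (T (S f)) f D) := by
  classical
  obtain ⟨hMem, hCong, hAdd, hSmul, hMul, hInj, hSurj⟩ := hT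
  set S : (ℂ → ℂ) → (ℂ → ℂ) :=
    fun g => if hg : g ∈ HinfUpTo n then (hSurj g hg).choose else g with hSdef
  have hS : ∀ g (hg : g ∈ HinfUpTo n), S g ∈ HinfUpTo n ∧ Set.EqOn (T (S g)) g D := by
    intro g hg
    rw [hSdef]
    simp only [dif_pos hg]
    exact (hSurj g hg).choose_spec
  refine ⟨S, ⟨fun g hg => (hS g hg).1, ?_, ?_, ?_, ?_, ?_, ?_⟩,
    fun f hf => (hS f hf).2⟩
  · intro g hg g' hg' hEq
    apply hInj _ (hS g hg).1 _ (hS g' hg').1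
    intro z hz
    rw [(hS g hg).2 hz, (hS g' hg').2 hz]
    exact hEq hz
  · intro g hg g' hg'
    apply hInj _ (hS _ (memA_add hg hg')).1 _ (memA_add (hS g hg).1 (hS g' hg').1)
    intro z hz
    rw [(hS _ (memA_add hg hg')).2 hz]
    have h1 := hAdd _ (hS g hg).1 _ (hS g' hg').1 hz
    rw [h1]
    simp only [Pi.add_apply]
    rw [(hS g hg).2 hz, (hS g' hg').2 hz]
  · intro cc g hg
    apply hInj _ (hS _ (memA_smul cc hg)).1 _ (memA_smul cc (hS g hg).1)
    intro z hz
    rw [(hS _ (memA_smul cc hg)).2 hz]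
    have h1 := hSmul cc _ (hS g hg).1 hz
    rw [h1]
    simp only [Pi.smul_apply, smul_eq_mul]
    rw [(hS g hg).2 hz]
  · intro g hg g' hg'
    apply hInj _ (hS _ (memA_mul hg hg')).1 _ (memA_mul (hS g hg).1 (hS g' hg').1)
    intro z hz
    rw [(hS _ (memA_mul hg hg')).2 hz]
    have h1 := hMul _ (hS g hg).1 _ (hS g' hg').1 hz
    rw [h1]
    simp only [Pi.mul_apply]
    rw [(hS g hg).2 hz, (hS g' hg').2 hz]
  · intro g hg g' hg' h
    intro z hz
    rw [← (hS g hg).2 hz, ← (hS g' hg').2 hz]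
    exact hCong _ (hS g hg).1 _ (hS g' hg').1 h hz
  · intro g hg
    refine ⟨T g, hMem g hg, ?_⟩
    apply hInj _ (hS (T g) (hMem g hg)).1 _ hg
    exact (hS (T g) (hMem g hg)).2

lemma forward_aut (n : ℕ) (T : (ℂ → ℂ) → (ℂ → ℂ)) (hT : IsAlgAutOn (HinfUpTo n) T) :
    ∃ θ : ℝ, ∀ f ∈ HinfUpTo n, ∀ z ∈ D,
      T f z = f (Complex.exp ((θ : ℂ) * Complex.I) * z) := by
  obtain ⟨τ, hτd, hτD, hτ0, hτ⟩ := key_aut n T hT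
  obtain ⟨S, hSaut, hTS⟩ := inverse_aut n T hT
  obtain ⟨σ, hσd, hσD, hσ0, hσ⟩ := key_aut n S hSaut
  have hmapsτ : Set.MapsTo τ D D := fun z hz => hτD z hz
  have hmapsσ : Set.MapsTo σ D D := fun z hz => hσD z hz
  have hST : ∀ f ∈ HinfUpTo n, ∀ lam ∈ D, f lam = f (σ (τ lam)) := by
    intro f hf lam hlam
    have h1 : T (S f) lam = f lam := hTS f hf hlam
    have h2 : T (S f) lam = (S f) (τ lam) := hτ (S f) (hSaut.1 f hf) lam hlam
    have h3 : (S f) (τ lam) = f (σ (τ lam)) := hσ f hf (τ lam) (hτD lam hlam)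
    rw [← h1, h2, h3]
  have hcomp : ∀ lam ∈ D, σ (τ lam) = lam := by
    intro lam hlam
    have h1 := hST (mono1 n) (mono1_memA n) lam hlam
    have h2 := hST (mono2 n) (mono2_memA n) lam hlam
    simp only [mono1, mono2] at h1 h2
    exact (eq_of_pow_eq h1 h2).symm
  have hτabs : ∀ lam ∈ D, ‖τ lam‖ = ‖lam‖ := by
    intro lam hlam
    have h1 : ‖τ lam‖ ≤ ‖lam‖ :=
      Complex.norm_le_norm_of_mapsTo_ball hτd (hmapsτ.mono_right ball_subset_closedBall) hτ0 (mem_D_iff.1 hlam)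
    have h2 : ‖σ (τ lam)‖ ≤ ‖τ lam‖ :=
      Complex.norm_le_norm_of_mapsTo_ball hσd (hmapsσ.mono_right ball_subset_closedBall) hσ0 (mem_D_iff.1 (hτD lam hlam))
    rw [hcomp lam hlam] at h2
    exact le_antisymm h1 h2
  have hhd : DifferentiableOn ℂ (dslope τ 0) D :=
    (differentiableOn_dslope (D_open.mem_nhds zero_mem_D)).2 hτd
  have hmul : ∀ z : ℂ, z * dslope τ 0 z = τ z := by
    intro z
    have h := sub_smul_dslope τ 0 z
    rw [smul_eq_mul, hτ0, sub_zero, sub_zero] at h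
    exact h
  have hh1 : ∀ z ∈ D, z ≠ 0 → ‖dslope τ 0 z‖ = 1 := by
    intro z hz hz0
    have h1 : ‖z‖ * ‖dslope τ 0 z‖ = ‖z‖ := by
      rw [← norm_mul, hmul z, hτabs z hz]
    have h2 : ‖z‖ ≠ 0 := by simpa using hz0
    exact mul_left_cancel₀ h2 (h1.trans (mul_one (‖z‖)).symm)
  have hh_le : ∀ z ∈ D, ‖dslope τ 0 z‖ ≤ 1 := by
    intro z hz
    have h := Complex.norm_dslope_le_div_of_mapsTo_ball hτd
      (show Set.MapsTo τ D (Metric.closedBall (τ 0) 1) by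
        rw [hτ0]; exact hmapsτ.mono_right ball_subset_closedBall) hz
    simpa using h
  have hmax : IsMaxOn (norm ∘ (dslope τ 0)) D (1/2 : ℂ) := by
    intro z hz
    simp only [Function.comp_apply]
    rw [hh1 (1/2) half_mem_D (by norm_num)]
    exact hh_le z hz
  have hconst := Complex.eqOn_of_isPreconnected_of_isMaxOn_norm D_preconn D_open hhd
    half_mem_D hmax
  have hcabs : ‖dslope τ 0 (1/2 : ℂ)‖ = 1 := hh1 _ half_mem_D (by norm_num)
  have hτeq : ∀ z ∈ D, τ z = dslope τ 0 (1/2 : ℂ) * z := by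
    intro z hz
    have h1 := hconst hz
    simp only [Function.const_apply] at h1
    rw [← hmul z, h1]
    ring
  refine ⟨Complex.arg (dslope τ 0 (1/2 : ℂ)), fun f hf z hz => ?_⟩
  have hexp : Complex.exp ((Complex.arg (dslope τ 0 (1/2 : ℂ)) : ℂ) * Complex.I)
      = dslope τ 0 (1/2 : ℂ) := by
    have h := Complex.norm_mul_exp_arg_mul_I (dslope τ 0 (1/2 : ℂ))
    rw [hcabs] at h
    simpa using h
  rw [hτ f hf z hz, hτeq z hz, hexp]
lemma rot_mem_A {n : ℕ} {c : ℂ} (hc : ‖c‖ = 1) {f : ℂ → ℂ}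
    (hf : f ∈ HinfUpTo n) : (fun z => f (c * z)) ∈ HinfUpTo n := by
  obtain ⟨⟨hfd, C, hC⟩, G, hG, hfG⟩ := mem_HinfUpTo_iff.1 hf
  have hmaps : ∀ z ∈ D, c * z ∈ D := by
    intro z hz
    rw [mem_D_iff, norm_mul, hc, one_mul]
    exact mem_D_iff.1 hz
  have hd : ∀ {u : ℂ → ℂ}, DifferentiableOn ℂ u D →
      DifferentiableOn ℂ (fun z => u (c * z)) D := by
    intro u hu z hz
    have h1 : DifferentiableAt ℂ u (c * z) :=
      hu.differentiableAt (D_open.mem_nhds (hmaps z hz))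
    exact (h1.comp z ((differentiable_id.const_mul c).differentiableAt)).differentiableWithinAt
  refine mem_HinfUpTo_iff.2 ⟨⟨hd hfd, C, fun z hz => hC _ (hmaps z hz)⟩,
    (fun z => c^(n+1) * G (c * z)), ⟨?_, ?_⟩, ?_⟩
  · exact (hd hG.1).const_mul (c^(n+1))
  · obtain ⟨CG, hCG⟩ := hG.2
    refine ⟨CG, fun z hz => ?_⟩
    rw [norm_mul, norm_pow, hc, one_pow, one_mul]
    exact hCG _ (hmaps z hz)
  · intro z hz
    rw [hfG (c * z) (hmaps z hz), mul_pow]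
    ring

lemma backward_aut (n : ℕ) (T : (ℂ → ℂ) → (ℂ → ℂ)) (θ : ℝ)
    (hθ : ∀ f ∈ HinfUpTo n, ∀ z ∈ D, T f z = f (Complex.exp ((θ:ℂ) * Complex.I) * z)) :
    IsAlgAutOn (HinfUpTo n) T := by
  set c := Complex.exp ((θ:ℂ) * Complex.I) with hcdef
  set c' := Complex.exp (((-θ:ℝ):ℂ) * Complex.I) with hc'def
  have hcabs : ‖c‖ = 1 := Complex.norm_exp_ofReal_mul_I θ
  have hc'abs : ‖c'‖ = 1 := Complex.norm_exp_ofReal_mul_I (-θ)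
  have hcc' : c * c' = 1 := by
    rw [hcdef, hc'def, ← Complex.exp_add]
    have harg : (θ:ℂ)*Complex.I + ((-θ:ℝ):ℂ)*Complex.I = 0 := by push_cast; ring
    rw [harg, Complex.exp_zero]
  have hmapsc : ∀ z ∈ D, c * z ∈ D := by
    intro z hz
    rw [mem_D_iff, norm_mul, hcabs, one_mul]
    exact mem_D_iff.1 hz
  have hmapsc' : ∀ z ∈ D, c' * z ∈ D := by
    intro z hz
    rw [mem_D_iff, norm_mul, hc'abs, one_mul]
    exact mem_D_iff.1 hz
  refine ⟨?_, ?_, ?_, ?_, ?_, ?_, ?_⟩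
  · intro f hf
    have hrot : (fun z => f (c * z)) ∈ HinfUpTo n := rot_mem_A hcabs hf
    obtain ⟨C, hC⟩ := hf.1.2
    refine memA_congr hrot (fun z hz => hθ f hf z hz) ⟨C, fun z hz => ?_⟩
    rw [hθ f hf z hz]
    exact hC _ (hmapsc z hz)
  · intro f hf g hg hEq z hz
    rw [hθ f hf z hz, hθ g hg z hz]
    exact hEq (hmapsc z hz)
  · intro f hf g hg z hz
    rw [Pi.add_apply, hθ _ (memA_add hf hg) z hz, hθ f hf z hz, hθ g hg z hz, Pi.add_apply]
  · intro cc f hf z hz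
    rw [hθ _ (memA_smul cc hf) z hz, Pi.smul_apply, Pi.smul_apply, smul_eq_mul, smul_eq_mul,
      hθ f hf z hz]
  · intro f hf g hg z hz
    rw [Pi.mul_apply, hθ _ (memA_mul hf hg) z hz, hθ f hf z hz, hθ g hg z hz, Pi.mul_apply]
  · intro f hf g hg h z hz
    have hz' : c' * z ∈ D := hmapsc' z hz
    have h1 := h hz'
    rw [hθ f hf _ hz', hθ g hg _ hz', ← mul_assoc, hcc', one_mul] at h1
    exact h1
  · intro g hg
    refine ⟨(fun z => g (c' * z)), rot_mem_A hc'abs hg, fun z hz => ?_⟩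
    rw [hθ _ (rot_mem_A hc'abs hg) z hz, ← mul_assoc, mul_comm c' c, hcc', one_mul]


/-- A map `T` on `H^∞_{0,1,…,n}(𝔻)` is an automorphism if and only if it is composition with a
rotation: `(Tf)(z) = f(e^{iθ} z)`. -/
theorem automorphism_of_HinfUpTo_iff (n : ℕ) (T : (ℂ → ℂ) → (ℂ → ℂ)) :
    IsAlgAutOn (HinfUpTo n) T ↔
      ∃ θ : ℝ, ∀ f ∈ HinfUpTo n, ∀ z ∈ D,
        T f z = f (Complex.exp ((θ : ℂ) * Complex.I) * z) := by
  constructor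
  · intro hT
    exact forward_aut n T hT
  · rintro ⟨θ, hθ⟩
    exact backward_aut n T θ hθ
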